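/- arXiv:1107.1017 — 2 statements merged into one kernel-verified Lean document; each statement's English description precedes it below -/
import Mathlib

section
/- Generalized splitting of a concatenation e₁ ++ … ++ eₙ: if l' = |e₁| + … + |e_{i−1}|, l' ≤ l, and l ≤ l' + |e_i|, then sub(e₁ ++ … ++ eₙ, 0, l) = e₁ ++ … ++ e_{i−1} ++ sub(e_i, 0, l − l'). -/
abbrev BS := List Bool

def sub (b : BS) (o l : ℕ) : Option BS :=
  if o + l ≤ b.length then some ((b.drop o).take l) else none

namespace List

variable {α : Type*}

theorem flatten_eq_flatten_take_append_getElem_append (L : List (List α)) {i : ℕ}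
    (hi : i < L.length) :
    L.flatten = (L.take i).flatten ++ (L[i] ++ (L.drop (i + 1)).flatten) := by
  rw [← flatten_cons, ← flatten_append, ← drop_eq_getElem_cons hi, take_append_drop]

theorem take_flatten_of_le_of_le (L : List (List α)) {i n : ℕ} (hi : i < L.length)
    (h₁ : (L.take i).flatten.length ≤ n)
    (h₂ : n ≤ (L.take i).flatten.length + L[i].length) :
    L.flatten.take n = (L.take i).flatten ++ L[i].take (n - (L.take i).flatten.length) := by
  have hrest : n - (L.take i).flatten.length - L[i].length = 0 := by omega
  rw [flatten_eq_flatten_take_append_getElem_append L hi, take_append,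
    take_of_length_le h₁, take_append, hrest, take_zero, append_nil]

theorem le_length_flatten_of_le (L : List (List α)) {i n : ℕ} (hi : i < L.length)
    (h : n ≤ (L.take i).flatten.length + L[i].length) : n ≤ L.flatten.length := by
  rw [flatten_eq_flatten_take_append_getElem_append L hi]
  simp only [length_append]
  omega

end List

theorem sub_offset_zero (b : BS) (l : ℕ) :
    sub b 0 l = if l ≤ b.length then some (b.take l) else none := by
  simp [sub]

/-- Soundness of the `cutL` rule: cutting the left part of length `l` from a
concatenation `e₁ ++ … ++ eₙ` by splitting within the `i`-th component. -/
theorem cutL_sound (es : List BS) (i : ℕ) (hi : i < es.length) (l : ℕ)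
    (l' : ℕ) (hl' : l' = ((es.take i).map List.length).sum)
    (h1 : l' ≤ l) (h2 : l ≤ l' + (es.get ⟨i, hi⟩).length) :
    sub es.flatten 0 l =
      (sub (es.get ⟨i, hi⟩) 0 (l - l')).map
        (fun s => (es.take i).flatten ++ s) := by
  rw [List.get_eq_getElem] at h2 ⊢
  have hprefix : (es.take i).flatten.length = l' := by rw [hl', List.length_flatten]
  subst hprefix
  rw [sub_offset_zero, sub_offset_zero, if_pos (es.le_length_flatten_of_le hi h2),
    if_pos (by omega), Option.map_some, es.take_flatten_of_le_of_le hi h1 h2]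
end

section
/- Generalized right split of a concatenation: under the same hypotheses as left splitting (l' = |e₁|+…+|e_{i−1}|, l' ≤ l ≤ l' + |e_i|, and setting L = |e₁ ++ … ++ eₙ|), one has sub(e₁ ++ … ++ eₙ, l, L − l) = sub(e_i, l − l', |e_i| − (l − l')) ++ e_{i+1} ++ … ++ eₙ. -/
theorem sub_length_sub_eq_some_drop {b : BS} {o : ℕ} (ho : o ≤ b.length) :
    sub b o (b.length - o) = some (b.drop o) := by
  rw [sub, if_pos (by omega), List.take_of_length_le (by simp)]

theorem List.flatten_eq_take_append_getElem_append_drop {α : Type*} (es : List (List α)) {i : ℕ}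
    (hi : i < es.length) :
    es.flatten = (es.take i).flatten ++ (es[i] ++ (es.drop (i + 1)).flatten) := by
  conv_lhs => rw [← List.take_append_drop i es, List.drop_eq_getElem_cons hi]
  simp only [List.flatten_append, List.flatten_cons]

theorem List.drop_flatten_of_le_length_getElem {α : Type*} (es : List (List α)) {i : ℕ}
    (hi : i < es.length) {k : ℕ} (hk : k ≤ es[i].length) :
    es.flatten.drop (((es.take i).map length).sum + k) =
      es[i].drop k ++ (es.drop (i + 1)).flatten := by
  rw [es.flatten_eq_take_append_getElem_append_drop hi, ← List.length_flatten,
    List.drop_length_add_append, List.drop_append_of_le_length hk]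

/-- Soundness of the `cutR` rule: the right part starting at position `l` of a
concatenation `e₁ ++ … ++ eₙ` is obtained by splitting within the `i`-th component. -/
theorem cutR_sound (es : List BS) (i : ℕ) (hi : i < es.length) (l : ℕ)
    (l' : ℕ) (hl' : l' = ((es.take i).map List.length).sum)
    (h1 : l' ≤ l) (h2 : l ≤ l' + (es.get ⟨i, hi⟩).length)
    (L : ℕ) (hL : L = es.flatten.length) :
    sub es.flatten l (L - l) =
      (sub (es.get ⟨i, hi⟩) (l - l') ((es.get ⟨i, hi⟩).length - (l - l'))).map
        (fun s => s ++ (es.drop (i + 1)).flatten) := by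
  subst hL
  obtain ⟨k, rfl⟩ := Nat.exists_eq_add_of_le h1
  simp only [List.get_eq_getElem, Nat.add_sub_cancel_left] at h2 ⊢
  have hk : k ≤ es[i].length := by omega
  have hlL : l' + k ≤ es.flatten.length := by
    rw [es.flatten_eq_take_append_getElem_append_drop hi, List.length_append,
      List.length_append, List.length_flatten, ← hl']
    omega
  rw [sub_length_sub_eq_some_drop hlL, sub_length_sub_eq_some_drop hk, Option.map_some, hl',
    es.drop_flatten_of_le_length_getElem hi hk]
end
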